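/- For complex matrices A of size m×n and B of size n×p, and any nonnegative integers i, j, the singular values satisfy s_{i+j+1}(AB) ≤ s_{i+1}(A) · s_{j+1}(B). -/

import Mathlib

/-!
Write `λₖ(M)` for the `k`-th largest eigenvalue of `Mᴴ * M`. Expanding in an eigenbasis of
`Mᴴ * M`, `‖M x‖² ≤ λₖ₊₁(M) ‖x‖²` as soon as `x` is orthogonal to the fewer than `k + 1`
eigenvectors whose eigenvalue exceeds `λₖ₊₁(M)`. Imposing this on `B x` for `A` and on `x` for
`B` costs at most `i + j` linear conditions on `x`, and on their common solution space
`‖A B x‖² ≤ λᵢ₊₁(A) λⱼ₊₁(B) ‖x‖²`. By the easy half of Courant–Fischer, a bound on the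
Rayleigh quotient on a subspace of codimension at most `k` bounds `λₖ₊₁`: otherwise the
eigenvectors with eigenvalue above the bound would span a subspace meeting it nontrivially.
Hence `λᵢ₊ⱼ₊₁(A B) ≤ λᵢ₊₁(A) λⱼ₊₁(B)`; take square roots.
-/

open scoped BigOperators

/-- The `k`-th largest value (1-indexed) of a finite family of reals, `0` if `k` is out of range. -/
noncomputable def kthLargest {m : ℕ} (v : Fin m → ℝ) (k : ℕ) : ℝ :=
  sSup {t : ℝ | k ≤ (Finset.univ.filter (fun i => t ≤ v i)).card}

/-- The `k`-th largest singular value (1-indexed) of a complex matrix, `0` beyond the rank range. -/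
noncomputable def sv {m n : ℕ} (M : Matrix (Fin m) (Fin n) ℂ) (k : ℕ) : ℝ :=
  Real.sqrt (kthLargest (Matrix.isHermitian_conjTranspose_mul_self M).eigenvalues k)

/-- The `k`-th largest singular value (1-indexed) of a real matrix. -/
noncomputable def svR {m n : ℕ} (M : Matrix (Fin m) (Fin n) ℝ) (k : ℕ) : ℝ :=
  Real.sqrt (kthLargest (Matrix.isHermitian_conjTranspose_mul_self M).eigenvalues k)

open Classical in
/-- The `k`-th largest eigenvalue (1-indexed) of a Hermitian matrix (junk value `0` otherwise). -/
noncomputable def eigH {n : ℕ} {𝕜 : Type*} [RCLike 𝕜] (M : Matrix (Fin n) (Fin n) 𝕜) (k : ℕ) : ℝ :=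
  if h : M.IsHermitian then kthLargest h.eigenvalues k else 0

section KthLargest

variable {m : ℕ} {v : Fin m → ℝ} {k : ℕ}

lemma bddAbove_setOf_le_card_filter (hk : 1 ≤ k) :
    BddAbove {t : ℝ | k ≤ (Finset.univ.filter (fun i => t ≤ v i)).card} := by
  obtain ⟨M, hM⟩ := (Set.finite_range v).bddAbove
  refine ⟨M, fun t ht => ?_⟩
  obtain ⟨i, hi⟩ := Finset.card_pos.1 (lt_of_lt_of_le hk ht)
  exact (Finset.mem_filter.1 hi).2.trans (hM (Set.mem_range_self i))

lemma kthLargest_le_of_card_filter_lt {c : ℝ} (hc : 0 ≤ c)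
    (h : (Finset.univ.filter (fun i => c < v i)).card < k) : kthLargest v k ≤ c := by
  refine Real.sSup_le (fun t ht => ?_) hc
  by_contra! hct
  refine (h.trans_le (le_trans ht (Finset.card_le_card fun i hi => ?_))).false
  exact Finset.mem_filter.2 ⟨Finset.mem_univ i, hct.trans_le (Finset.mem_filter.1 hi).2⟩

lemma card_filter_kthLargest_lt_lt (hk : 1 ≤ k) :
    (Finset.univ.filter (fun i => kthLargest v k < v i)).card < k := by
  set T := Finset.univ.filter (fun i => kthLargest v k < v i)
  by_contra! hkT
  have hT : T.Nonempty := Finset.card_pos.1 (lt_of_lt_of_le hk hkT)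
  obtain ⟨i, hiT, hi⟩ := Finset.exists_mem_eq_inf' hT v
  have hmem : k ≤ (Finset.univ.filter (fun j => T.inf' hT v ≤ v j)).card :=
    hkT.trans (Finset.card_le_card fun j hj =>
      Finset.mem_filter.2 ⟨Finset.mem_univ j, Finset.inf'_le v hj⟩)
  have hle := le_csSup (bddAbove_setOf_le_card_filter hk) hmem
  rw [hi] at hle
  exact (Finset.mem_filter.1 hiT).2.not_ge hle

lemma kthLargest_nonneg (hv : ∀ i, 0 ≤ v i) : 0 ≤ kthLargest v k := by
  rcases le_or_gt k m with hkm | hmk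
  · refine Real.sSup_nonneg' ⟨0, ?_, le_rfl⟩
    simpa [hv] using hkm
  · refine Real.sSup_nonneg fun t (ht : k ≤ _) => absurd ht (not_le.2 ?_)
    exact (Finset.card_filter_le _ _).trans_lt (by simpa using hmk)

end KthLargest

open scoped InnerProductSpace
open Matrix

lemma Module.exists_ne_zero_forall_apply_eq_zero {K V ι : Type*} [Field K] [AddCommGroup V]
    [Module K V] [FiniteDimensional K V] [Fintype ι] (φ : ι → V →ₗ[K] K)
    (h : Fintype.card ι < Module.finrank K V) : ∃ x ≠ 0, ∀ r, φ r x = 0 := by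
  obtain ⟨x, hx, hx0⟩ := Submodule.exists_mem_ne_zero_of_ne_bot
    ((LinearMap.pi φ).ker_ne_bot_of_finrank_lt (by simpa using h))
  exact ⟨x, hx0, fun r => congrFun (LinearMap.mem_ker.1 hx) r⟩

lemma Matrix.sq_norm_toEuclideanLin_eq_re_inner {𝕜 m n : Type*} [RCLike 𝕜] [Fintype m]
    [Fintype n] [DecidableEq m] [DecidableEq n] (M : Matrix m n 𝕜) (x : EuclideanSpace 𝕜 n) :
    ‖toEuclideanLin M x‖ ^ 2 = RCLike.re ⟪x, toEuclideanLin (Mᴴ * M) x⟫_𝕜 := by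
  rw [toLpLin_mul_same, LinearMap.comp_apply, toEuclideanLin_conjTranspose_eq_adjoint,
    LinearMap.adjoint_inner_right, inner_self_eq_norm_sq]

namespace Matrix.IsHermitian

variable {𝕜 n : Type*} [RCLike 𝕜] [Fintype n] [DecidableEq n] {H : Matrix n n 𝕜}
  (hH : H.IsHermitian)

lemma toEuclideanLin_eigenvectorBasis (t : n) :
    toEuclideanLin H (hH.eigenvectorBasis t) =
      (hH.eigenvalues t : 𝕜) • hH.eigenvectorBasis t := by
  rw [toLpLin_apply, hH.mulVec_eigenvectorBasis, RCLike.real_smul_eq_coe_smul (K := 𝕜)]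
  rfl

lemma re_inner_toEuclideanLin_self (x : EuclideanSpace 𝕜 n) :
    RCLike.re ⟪x, toEuclideanLin H x⟫_𝕜 =
      ∑ t, hH.eigenvalues t * ‖⟪hH.eigenvectorBasis t, x⟫_𝕜‖ ^ 2 := by
  rw [← hH.eigenvectorBasis.sum_inner_mul_inner, map_sum]
  refine Finset.sum_congr rfl fun t _ => ?_
  rw [← isSymmetric_toEuclideanLin_iff.mpr hH, hH.toEuclideanLin_eigenvectorBasis,
    inner_smul_left, RCLike.conj_ofReal, mul_left_comm, ← inner_conj_symm x, RCLike.conj_mul]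
  norm_cast

variable {c : ℝ} {x : EuclideanSpace 𝕜 n}

lemma re_inner_toEuclideanLin_self_le
    (hx : ∀ t, c < hH.eigenvalues t → ⟪hH.eigenvectorBasis t, x⟫_𝕜 = 0) :
    RCLike.re ⟪x, toEuclideanLin H x⟫_𝕜 ≤ c * ‖x‖ ^ 2 := by
  rw [hH.re_inner_toEuclideanLin_self, ← hH.eigenvectorBasis.sum_sq_norm_inner_right x,
    Finset.mul_sum]
  refine Finset.sum_le_sum fun t _ => ?_
  rcases le_or_gt (hH.eigenvalues t) c with h | h
  · gcongr
  · simp [hx t h]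

lemma lt_re_inner_toEuclideanLin_self (hx0 : x ≠ 0)
    (hx : ∀ t, hH.eigenvalues t ≤ c → ⟪hH.eigenvectorBasis t, x⟫_𝕜 = 0) :
    c * ‖x‖ ^ 2 < RCLike.re ⟪x, toEuclideanLin H x⟫_𝕜 := by
  rw [hH.re_inner_toEuclideanLin_self, ← hH.eigenvectorBasis.sum_sq_norm_inner_right x,
    Finset.mul_sum]
  obtain ⟨t, ht⟩ : ∃ t, ⟪hH.eigenvectorBasis t, x⟫_𝕜 ≠ 0 := by
    by_contra! h
    exact hx0 (by simpa [h] using (hH.eigenvectorBasis.sum_repr' x).symm)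
  have hct : c < hH.eigenvalues t := not_le.1 fun h => ht (hx t h)
  refine Finset.sum_lt_sum (fun s _ => ?_) ⟨t, Finset.mem_univ t, by gcongr⟩
  rcases le_or_gt (hH.eigenvalues s) c with h | h
  · simp [hx s h]
  · gcongr

end Matrix.IsHermitian

lemma Matrix.IsHermitian.kthLargest_eigenvalues_le {𝕜 : Type*} [RCLike 𝕜] {p : ℕ}
    {H : Matrix (Fin p) (Fin p) 𝕜} (hH : H.IsHermitian) {ι : Type*} [Fintype ι] {k : ℕ}
    (hι : Fintype.card ι ≤ k) (φ : ι → EuclideanSpace 𝕜 (Fin p) →ₗ[𝕜] 𝕜) {c : ℝ} (hc : 0 ≤ c)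
    (h : ∀ x, (∀ r, φ r x = 0) → RCLike.re ⟪x, toEuclideanLin H x⟫_𝕜 ≤ c * ‖x‖ ^ 2) :
    kthLargest hH.eigenvalues (k + 1) ≤ c := by
  refine kthLargest_le_of_card_filter_lt hc (not_le.1 fun hk => ?_)
  have hcard : Fintype.card ι + Fintype.card {t // hH.eigenvalues t ≤ c} < p := by
    have := Finset.card_filter_add_card_filter_not (s := Finset.univ)
      (fun t => hH.eigenvalues t ≤ c)
    simp only [not_le, Finset.card_univ, Fintype.card_fin] at this
    rw [Fintype.card_subtype]
    omega
  obtain ⟨x, hx0, hx⟩ := Module.exists_ne_zero_forall_apply_eq_zero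
    (Sum.elim φ fun t : {t // hH.eigenvalues t ≤ c} => innerₛₗ 𝕜 (hH.eigenvectorBasis t))
    (by simpa using hcard)
  exact (h x fun r => hx (.inl r)).not_gt
    (hH.lt_re_inner_toEuclideanLin_self hx0 fun t ht => hx (.inr ⟨t, ht⟩))

lemma kthLargest_eigenvalues_conjTranspose_mul_self_mul_le {𝕜 : Type*} [RCLike 𝕜] {m n p : ℕ}
    (A : Matrix (Fin m) (Fin n) 𝕜) (B : Matrix (Fin n) (Fin p) 𝕜) (i j : ℕ) :
    kthLargest (isHermitian_conjTranspose_mul_self (A * B)).eigenvalues (i + j + 1) ≤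
      kthLargest (isHermitian_conjTranspose_mul_self A).eigenvalues (i + 1) *
        kthLargest (isHermitian_conjTranspose_mul_self B).eigenvalues (j + 1) := by
  set hA := isHermitian_conjTranspose_mul_self A
  set hB := isHermitian_conjTranspose_mul_self B
  set a := kthLargest hA.eigenvalues (i + 1)
  set b := kthLargest hB.eigenvalues (j + 1)
  have ha : 0 ≤ a := kthLargest_nonneg (eigenvalues_conjTranspose_mul_self_nonneg A)
  have hb : 0 ≤ b := kthLargest_nonneg (eigenvalues_conjTranspose_mul_self_nonneg B)
  let SA := {s // a < hA.eigenvalues s}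
  let SB := {t // b < hB.eigenvalues t}
  have hcard : Fintype.card (SA ⊕ SB) ≤ i + j := by
    have hSA : (Finset.univ.filter fun s => a < hA.eigenvalues s).card < i + 1 :=
      card_filter_kthLargest_lt_lt (Nat.le_add_left 1 i)
    have hSB : (Finset.univ.filter fun t => b < hB.eigenvalues t).card < j + 1 :=
      card_filter_kthLargest_lt_lt (Nat.le_add_left 1 j)
    rw [Fintype.card_sum, Fintype.card_subtype, Fintype.card_subtype]
    omega
  let φ : SA ⊕ SB → EuclideanSpace 𝕜 (Fin p) →ₗ[𝕜] 𝕜 :=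
    Sum.elim (fun s => innerₛₗ 𝕜 (hA.eigenvectorBasis s) ∘ₗ toEuclideanLin B)
      (fun t => innerₛₗ 𝕜 (hB.eigenvectorBasis t))
  refine (isHermitian_conjTranspose_mul_self (A * B)).kthLargest_eigenvalues_le hcard φ
    (mul_nonneg ha hb) fun x hx => ?_
  rw [← sq_norm_toEuclideanLin_eq_re_inner, toLpLin_mul_same, LinearMap.comp_apply]
  calc ‖toEuclideanLin A (toEuclideanLin B x)‖ ^ 2 ≤ a * ‖toEuclideanLin B x‖ ^ 2 := by
        rw [sq_norm_toEuclideanLin_eq_re_inner]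
        exact hA.re_inner_toEuclideanLin_self_le fun s hs => hx (.inl ⟨s, hs⟩)
    _ ≤ a * (b * ‖x‖ ^ 2) := by
        rw [sq_norm_toEuclideanLin_eq_re_inner]
        gcongr
        exact hB.re_inner_toEuclideanLin_self_le fun t ht => hx (.inr ⟨t, ht⟩)
    _ = a * b * ‖x‖ ^ 2 := (mul_assoc a b _).symm

/-- `s_{i+j+1}(AB) ≤ s_{i+1}(A)·s_{j+1}(B)`. -/
theorem stmt4 {m n p : ℕ} (A : Matrix (Fin m) (Fin n) ℂ) (B : Matrix (Fin n) (Fin p) ℂ)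
    (i j : ℕ) :
    sv (A * B) (i + j + 1) ≤ sv A (i + 1) * sv B (j + 1) := by
  rw [sv, sv, sv, ← Real.sqrt_mul (kthLargest_nonneg (eigenvalues_conjTranspose_mul_self_nonneg A))]
  exact Real.sqrt_le_sqrt (kthLargest_eigenvalues_conjTranspose_mul_self_mul_le A B i j)
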